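/- If h is a noncentral involution in a good group H of exponent 4 whose Frattini subgroup Φ(H) has order greater than 2, then H has an abelian subgroup A of index 2 such that every element of A is inverted under conjugation by h. -/

import Mathlib

/-- A group is *dihedral* if it is isomorphic to some `DihedralGroup n` with `n ≠ 0`. -/
def IsDihedralGroup (Q : Type*) [Group Q] : Prop :=
  ∃ n : ℕ, n ≠ 0 ∧ Nonempty (Q ≃* DihedralGroup n)

/-- A 2-group `G` is *good* if for all `g h : G` the subgroup `⟨g²⟩` is normal in `G`
and the quotient `⟨g,h⟩/⟨g²⟩` is abelian or dihedral. -/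
def IsGood (G : Type*) [Group G] : Prop :=
  IsPGroup 2 G ∧
  ∀ g h : G, ∃ hn : (Subgroup.zpowers (g ^ 2)).Normal,
    haveI := hn.subgroupOf (Subgroup.closure {g, h})
    (∀ x y : ↥(Subgroup.closure {g, h}) ⧸
        (Subgroup.zpowers (g ^ 2)).subgroupOf (Subgroup.closure {g, h}), x * y = y * x) ∨
    IsDihedralGroup (↥(Subgroup.closure {g, h}) ⧸
        (Subgroup.zpowers (g ^ 2)).subgroupOf (Subgroup.closure {g, h}))

/-!
Squares are central in a good group of exponent 4, so commutators are central of order at most 2,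
symmetric and bimultiplicative, and `(xy)² = x²y²[x, y]`. Since an involution `g` and any `k`
generate an abelian group or a dihedral group of order dividing 8, an involution centralizes or
inverts each element of order 4. For the involution `h`, this forces an element of order 4
centralized by `h` to have the same square as every element inverted by `h`; as `Φ(H)` lies in
the subgroup generated by the squares and `|Φ(H)| > 2`, there are two distinct nontrivial
squares, so `h` inverts every element of order 4, and these commute pairwise. The subgroup `A` is the centralizer of the elements of order 4: `h` inverts
it (so it is abelian), `h ∉ A`, and `g ∈ A` or `gh ∈ A` for every `g`.
-/

open Subgroup
open scoped commutatorElement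

theorem frattini_eq_bot_of_forall_sq_eq_one {Q : Type*} [Group Q] (hQ : ∀ x : Q, x ^ 2 = 1) :
    frattini Q = ⊥ := by
  let _ : CommGroup Q :=
    { mul_comm := Commute.of_orderOf_dvd_two fun x => orderOf_dvd_of_pow_eq_one (hQ x) }
  let _ : Module (ZMod 2) (Additive Q) := AddCommGroup.zmodModule fun x => hQ x.toMul
  refine eq_bot_iff.2 fun v hv => of_not_not fun hv1 => ?_
  obtain ⟨φ, hφ⟩ := Module.Projective.exists_dual_eq_one (ZMod 2) (x := Additive.ofMul v) hv1
  let χ : Q →* Multiplicative (ZMod 2) := AddMonoidHom.toMultiplicativeRight φ.toAddMonoidHom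
  have hχ : χ v = Multiplicative.ofAdd 1 := congrArg Multiplicative.ofAdd hφ
  have hχ_surj : Function.Surjective χ := fun c => by
    obtain rfl | rfl : c = 1 ∨ c = Multiplicative.ofAdd 1 := by revert c; decide
    exacts [⟨1, map_one χ⟩, ⟨v, hχ⟩]
  have : Fact (Nat.Prime 2) := ⟨Nat.prime_two⟩
  have : IsSimpleGroup (Multiplicative (ZMod 2)) := isSimpleGroup_of_prime_card (p := 2) (by simp)
  have := frattini_le_coatom (isCoatom_comap_of_surjective hχ_surj isCoatom_bot) hv
  simp [hχ] at this

theorem frattini_le_of_forall_sq_mem {G : Type*} [Group G] {N : Subgroup G} [N.Normal]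
    (hN : ∀ g : G, g ^ 2 ∈ N) : frattini G ≤ N := by
  have hQ : ∀ x : G ⧸ N, x ^ 2 = 1 := by
    rintro ⟨g⟩
    exact (QuotientGroup.eq_one_iff _).2 (hN g)
  have := frattini_le_comap_frattini_of_surjective (QuotientGroup.mk'_surjective N)
  rwa [frattini_eq_bot_of_forall_sq_eq_one hQ, MonoidHom.comap_bot, QuotientGroup.ker_mk'] at this

theorem card_frattini_pos_le_two {G : Type*} [Group G] {w : G} (hw : w ∈ center G)
    (hw2 : w ^ 2 = 1) (hsq : ∀ g : G, g ^ 2 = 1 ∨ g ^ 2 = w) :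
    0 < Nat.card (frattini G) ∧ Nat.card (frattini G) ≤ 2 := by
  have : (zpowers w).Normal := ⟨fun n hn g => by
    rwa [mem_center_iff.1 (zpowers_le.2 hw hn) g, mul_inv_cancel_right]⟩
  have hle : frattini G ≤ zpowers w := frattini_le_of_forall_sq_mem fun g => by
    rcases hsq g with h | h <;> rw [h]
    exacts [one_mem _, mem_zpowers w]
  have : Finite (zpowers w) :=
    (isOfFinOrder_iff_pow_eq_one.2 ⟨2, two_pos, hw2⟩).finite_zpowers.to_subtype
  have : Finite (frattini G) := Finite.of_injective _ (inclusion_injective hle)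
  refine ⟨Nat.card_pos, (card_le_of_le hle).trans ?_⟩
  rw [Nat.card_zpowers]
  exact orderOf_le_of_pow_eq_one two_pos hw2

namespace CentralSquares

variable {G : Type*} [Group G] (hsq : ∀ x : G, x ^ 2 ∈ center G)
include hsq

theorem commutatorElement_eq (x y : G) : ⁅x, y⁆ = (x * y) ^ 2 * (x ^ 2)⁻¹ * (y ^ 2)⁻¹ :=
  calc ⁅x, y⁆ = x * y * ((x ^ 2)⁻¹ * (x * y)) * (y ^ 2)⁻¹ := by
        rw [commutatorElement_def]; group
    _ = (x * y) ^ 2 * (x ^ 2)⁻¹ * (y ^ 2)⁻¹ := by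
      rw [← mem_center_iff.1 (inv_mem (hsq x)), sq (x * y)]; group

theorem commutatorElement_mem_center (x y : G) : ⁅x, y⁆ ∈ center G := by
  rw [commutatorElement_eq hsq]
  exact mul_mem (mul_mem (hsq _) (inv_mem (hsq x))) (inv_mem (hsq y))

theorem commutatorElement_mul_left (x y z : G) : ⁅x * y, z⁆ = ⁅x, z⁆ * ⁅y, z⁆ := by
  have hc := mem_center_iff.1 (commutatorElement_mem_center hsq y z)
  rw [commutatorElement_mul_left_eq_conj_mul, hc x, mul_inv_cancel_right]
  exact (hc _).symm

theorem commutatorElement_mul_self (x y : G) : ⁅x, y⁆ * ⁅x, y⁆ = 1 := by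
  rw [← commutatorElement_mul_left hsq, commutatorElement_eq_one_iff_mul_comm, ← sq]
  exact (mem_center_iff.1 (hsq x) y).symm

theorem commutatorElement_comm (x y : G) : ⁅x, y⁆ = ⁅y, x⁆ := by
  rw [← commutatorElement_inv]
  exact inv_eq_of_mul_eq_one_right (commutatorElement_mul_self hsq y x)

theorem commutatorElement_mul_right (x y z : G) : ⁅x, y * z⁆ = ⁅x, y⁆ * ⁅x, z⁆ := by
  rw [commutatorElement_comm hsq x, commutatorElement_mul_left hsq, commutatorElement_comm hsq y,
    commutatorElement_comm hsq z]

theorem mul_sq (x y : G) : (x * y) ^ 2 = x ^ 2 * y ^ 2 * ⁅x, y⁆ := by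
  have hc := mem_center_iff.1 (commutatorElement_mem_center hsq y x)
  calc (x * y) ^ 2 = x * ⁅y, x⁆ * x * y ^ 2 := by rw [commutatorElement_def, sq (x * y)]; group
    _ = ⁅y, x⁆ * (x ^ 2 * y ^ 2) := by rw [hc x]; group
    _ = x ^ 2 * y ^ 2 * ⁅x, y⁆ := by rw [commutatorElement_comm hsq x y, hc]

end CentralSquares

theorem Subgroup.mul_comm_of_forall_inv_mul_mul_eq_inv {G : Type*} [Group G] {A : Subgroup G}
    {h : G} (hA : ∀ a ∈ A, h⁻¹ * a * h = a⁻¹) {a b : G} (ha : a ∈ A) (hb : b ∈ A) :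
    a * b = b * a := by
  have e : (a * b)⁻¹ = a⁻¹ * b⁻¹ := by
    rw [← hA _ (mul_mem ha hb), ← hA a ha, ← hA b hb]; group
  simpa using congrArg (·⁻¹) e

theorem Subgroup.mem_centralizer_iff_commutatorElement_eq_one {G : Type*} [Group G] {S : Set G}
    {g : G} : g ∈ centralizer S ↔ ∀ t ∈ S, ⁅g, t⁆ = 1 := by
  simp [mem_centralizer_iff, commutatorElement_eq_one_iff_mul_comm, eq_comm]

theorem DihedralGroup.commutatorElement_eq_one_or_sq {n : ℕ} (hn : n ∣ 4)
    (u v : DihedralGroup n) (hu : u ^ 2 = 1) (hv : v ^ 2 ≠ 1) :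
    ⁅u, v⁆ = 1 ∨ ⁅u, v⁆ = v ^ 2 := by
  obtain rfl | rfl | rfl : n = 1 ∨ n = 2 ∨ n = 4 := by
    have := Nat.le_of_dvd four_pos hn
    interval_cases n <;> simp_all
  all_goals revert u v; decide

theorem IsGood.sq_mem_center {G : Type*} [Group G] (hG : IsGood G) (hexp : ∀ x : G, x ^ 4 = 1)
    (g : G) : g ^ 2 ∈ center G := by
  obtain ⟨hn, -⟩ := hG.2 g g
  refine mem_center_iff.2 fun x => ?_
  obtain ⟨n, hconj⟩ := mem_zpowers_iff.1 (hn.conj_mem _ (mem_zpowers _) x)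
  rw [zpow_eq_zpow_emod n (n := 2) (by rw [zpow_two, ← pow_add]; exact hexp g)] at hconj
  rcases Int.emod_two_eq_zero_or_one n with h | h <;> rw [h] at hconj
  · rw [zpow_zero, eq_comm, conj_eq_one_iff] at hconj
    rw [hconj, mul_one, one_mul]
  · rw [zpow_one, eq_mul_inv_iff_mul_eq] at hconj
    exact hconj.symm

theorem IsGood.commutatorElement_eq_one_or_sq {G : Type*} [Group G] (hG : IsGood G)
    (hexp : ∀ x : G, x ^ 4 = 1) {g k : G} (hg : g ^ 2 = 1) (hk : k ^ 2 ≠ 1) :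
    ⁅g, k⁆ = 1 ∨ ⁅g, k⁆ = k ^ 2 := by
  obtain ⟨hn, hcases⟩ := hG.2 g k
  set K := closure {g, k}
  have := hn.subgroupOf K
  let q := QuotientGroup.mk' ((zpowers (g ^ 2)).subgroupOf K)
  have hq : Function.Injective q := by
    rw [← MonoidHom.ker_eq_bot_iff, QuotientGroup.ker_mk']
    simp only [hg, zpowers_one_eq_bot, bot_subgroupOf]
  let g' : K := ⟨g, subset_closure (by simp)⟩
  let k' : K := ⟨k, subset_closure (by simp)⟩
  have hg' : g' ^ 2 = 1 := Subtype.ext hg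
  suffices ⁅g', k'⁆ = 1 ∨ ⁅g', k'⁆ = k' ^ 2 by
    simpa [Subtype.ext_iff, commutatorElement_def] using this
  rcases hcases with habel | ⟨n, -, ⟨φ⟩⟩
  · refine Or.inl (hq ?_)
    rw [map_commutatorElement, map_one, commutatorElement_eq_one_iff_mul_comm]
    exact habel _ _
  let ψ := φ.toMonoidHom.comp q
  have hψ : Function.Injective ψ := φ.injective.comp hq
  have hn : n ∣ 4 := by
    obtain ⟨x, hx⟩ : ∃ x, ψ x = .r 1 := φ.surjective.comp (QuotientGroup.mk'_surjective _) _
    rw [← DihedralGroup.orderOf_r_one (n := n)]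
    refine orderOf_dvd_of_pow_eq_one ?_
    rw [← hx, ← map_pow, show x ^ 4 = 1 from Subtype.ext (hexp x), map_one]
  have := DihedralGroup.commutatorElement_eq_one_or_sq hn (ψ g') (ψ k')
    (by rw [← map_pow, hg', map_one])
    (by rwa [← map_pow, Ne, ← map_one ψ, hψ.eq_iff, Subtype.ext_iff])
  simpa only [← map_commutatorElement, ← map_pow, ← map_one ψ, hψ.eq_iff] using this

structure IsGoodExpFour (G : Type*) [Group G] : Prop where
  pow_four_eq_one : ∀ x : G, x ^ 4 = 1
  sq_mem_center : ∀ x : G, x ^ 2 ∈ center G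
  -- As `k ^ 4 = 1`, `⁅g, k⁆ = k ^ 2` says that `g` inverts `k`; inversion is written so below.
  commutatorElement_eq_one_or_sq :
    ∀ g k : G, g ^ 2 = 1 → k ^ 2 ≠ 1 → ⁅g, k⁆ = 1 ∨ ⁅g, k⁆ = k ^ 2

theorem IsGood.isGoodExpFour {G : Type*} [Group G] (hG : IsGood G) (hexp : ∀ x : G, x ^ 4 = 1) :
    IsGoodExpFour G :=
  ⟨hexp, hG.sq_mem_center hexp, fun _ _ => hG.commutatorElement_eq_one_or_sq hexp⟩

namespace IsGoodExpFour

open CentralSquares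

variable {G : Type*} [Group G] (hG : IsGoodExpFour G)
include hG

theorem sq_mul_sq (x : G) : x ^ 2 * x ^ 2 = 1 := by
  rw [← pow_add]; exact hG.pow_four_eq_one x

theorem sq_inv (x : G) : (x ^ 2)⁻¹ = x ^ 2 :=
  inv_eq_of_mul_eq_one_right (hG.sq_mul_sq x)

variable {h : G} (hh : h ^ 2 = 1)
include hh

theorem inv_mul_mul_eq_inv {a : G} (ha : ⁅h, a⁆ = a ^ 2) : h⁻¹ * a * h = a⁻¹ := by
  have hh' : h⁻¹ = h := inv_eq_of_mul_eq_one_right (by rw [← sq]; exact hh)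
  have : h * a * h⁻¹ = a⁻¹ :=
    calc h * a * h⁻¹ = ⁅h, a⁆ * a := by rw [commutatorElement_def]; group
      _ = a⁻¹ := by
        rw [ha]; exact eq_inv_of_mul_eq_one_left (by rw [← hG.pow_four_eq_one a]; group)
  simpa [hh'] using this

theorem mul_sq_eq_one_of_inverted {s : G} (hs : ⁅h, s⁆ = s ^ 2) : (s * h) ^ 2 = 1 := by
  rw [mul_sq hG.sq_mem_center, hh, mul_one, commutatorElement_comm hG.sq_mem_center, hs,
    hG.sq_mul_sq]

theorem commutatorElement_eq_one_or_sq_of_inverted {s x : G} (hs : ⁅h, s⁆ = s ^ 2)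
    (hx : x ^ 2 ≠ 1) : ⁅s, x⁆ = 1 ∨ ⁅s, x⁆ = x ^ 2 := by
  have hsplit := commutatorElement_mul_left hG.sq_mem_center s h x
  have hsh := hG.mul_sq_eq_one_of_inverted hh hs
  rcases hG.commutatorElement_eq_one_or_sq _ _ hsh hx with h1 | h1 <;>
    rcases hG.commutatorElement_eq_one_or_sq _ _ hh hx with h2 | h2 <;>
    rw [h1, h2] at hsplit
  · exact Or.inl (by simpa using hsplit.symm)
  · exact Or.inr (by rw [eq_inv_of_mul_eq_one_left hsplit.symm, hG.sq_inv])
  · exact Or.inr (by simpa using hsplit.symm)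
  · exact Or.inl (mul_eq_right.1 hsplit.symm)

theorem exists_inverted_sq_ne_one (hnc : h ∉ center G) :
    ∃ s : G, ⁅h, s⁆ = s ^ 2 ∧ s ^ 2 ≠ 1 := by
  obtain ⟨k, hk⟩ : ∃ k : G, ⁅h, k⁆ ≠ 1 := by
    by_contra! hc
    exact hnc (mem_center_iff.2 fun k => (commutatorElement_eq_one_iff_mul_comm.1 (hc k)).symm)
  by_cases hk2 : k ^ 2 = 1
  · have hkh : (k * h) ^ 2 = ⁅h, k⁆ := by
      rw [mul_sq hG.sq_mem_center, hk2, hh, one_mul, one_mul,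
        commutatorElement_comm hG.sq_mem_center]
    refine ⟨k * h, ?_, hkh ▸ hk⟩
    rw [hkh, commutatorElement_mul_right hG.sq_mem_center, commutatorElement_self, mul_one]
  · exact ⟨k, (hG.commutatorElement_eq_one_or_sq h k hh hk2).resolve_left hk, hk2⟩

theorem sq_eq_sq_of_commute_of_inverted {p s : G} (hp : ⁅h, p⁆ = 1) (hp2 : p ^ 2 ≠ 1)
    (hs : ⁅h, s⁆ = s ^ 2) (hs2 : s ^ 2 ≠ 1) : p ^ 2 = s ^ 2 := by
  have hsq := hG.sq_mem_center
  have hps : ⁅h, p * s⁆ = s ^ 2 := by rw [commutatorElement_mul_right hsq, hp, one_mul, hs]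
  rcases hG.commutatorElement_eq_one_or_sq_of_inverted hh hs hp2 with hsp | hsp
  · have hps2 : (p * s) ^ 2 = p ^ 2 * s ^ 2 := by
      rw [mul_sq hsq, commutatorElement_comm hsq, hsp, mul_one]
    by_contra hne
    have hps2' : (p * s) ^ 2 ≠ 1 := by
      rw [hps2]
      exact fun e => hne (by rw [mul_eq_one_iff_eq_inv.1 e, hG.sq_inv])
    rcases hG.commutatorElement_eq_one_or_sq h _ hh hps2' with e | e
    · exact hs2 (hps ▸ e)
    · rw [hps, hps2] at e
      exact hp2 (mul_eq_right.1 e.symm)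
  · have hps2 : (p * s) ^ 2 = s ^ 2 := by
      rw [mul_sq hsq, commutatorElement_comm hsq, hsp, ← mem_center_iff.1 (hsq p), mul_assoc,
        hG.sq_mul_sq, mul_one]
    have := hG.commutatorElement_eq_one_or_sq_of_inverted hh (hps.trans hps2.symm) hs2
    rw [commutatorElement_mul_left hsq, commutatorElement_self, mul_one,
      commutatorElement_comm hsq, hsp] at this
    exact this.resolve_left hp2

theorem inverted_of_sq_ne_one (hfr : Nat.card (frattini G) = 0 ∨ 2 < Nat.card (frattini G))
    (hnc : h ∉ center G) {x : G} (hx : x ^ 2 ≠ 1) : ⁅h, x⁆ = x ^ 2 := by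
  refine (hG.commutatorElement_eq_one_or_sq h x hh hx).resolve_left fun hx1 => ?_
  obtain ⟨s, hs, hs2⟩ := hG.exists_inverted_sq_ne_one hh hnc
  have hsquares : ∀ g : G, g ^ 2 = 1 ∨ g ^ 2 = s ^ 2 := by
    refine fun g => or_iff_not_imp_left.2 fun hg => ?_
    rcases hG.commutatorElement_eq_one_or_sq h g hh hg with e | e
    · exact hG.sq_eq_sq_of_commute_of_inverted hh e hg hs hs2
    · exact (hG.sq_eq_sq_of_commute_of_inverted hh hx1 hx e hg).symm.trans
        (hG.sq_eq_sq_of_commute_of_inverted hh hx1 hx hs hs2)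
  have := card_frattini_pos_le_two (hG.sq_mem_center s)
    (by rw [← pow_mul]; exact hG.pow_four_eq_one s) hsquares
  omega

variable (hT : ∀ x : G, x ^ 2 ≠ 1 → ⁅h, x⁆ = x ^ 2)
include hT

theorem commutatorElement_eq_one_of_sq_ne_one {x y : G} (hx : x ^ 2 ≠ 1) (hy : y ^ 2 ≠ 1) :
    ⁅x, y⁆ = 1 := by
  have hsq := hG.sq_mem_center
  by_contra hxy
  have hxy' : ⁅x, y⁆ = y ^ 2 :=
    (hG.commutatorElement_eq_one_or_sq_of_inverted hh (hT x hx) hy).resolve_left hxy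
  have hyx : ⁅y, x⁆ = x ^ 2 :=
    (hG.commutatorElement_eq_one_or_sq_of_inverted hh (hT y hy) hx).resolve_left
      (by rwa [commutatorElement_comm hsq])
  rw [commutatorElement_comm hsq] at hyx
  have hsq_xy : (x * y) ^ 2 = ⁅x, y⁆ := by
    rw [mul_sq hsq, ← hyx, ← hxy', commutatorElement_mul_self hsq, one_mul]
  have := hT (x * y) (by rwa [hsq_xy])
  rw [commutatorElement_mul_right hsq, hT x hx, hT y hy, hsq_xy, ← hyx, ← hxy',
    commutatorElement_mul_self hsq] at this
  exact hxy this.symm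

theorem inverted_of_mem_centralizer {a : G} (ha : a ∈ centralizer {x : G | x ^ 2 ≠ 1}) :
    ⁅h, a⁆ = a ^ 2 := by
  have hsq := hG.sq_mem_center
  by_cases ha2 : a ^ 2 = 1
  · rw [ha2]
    by_contra hc
    have hah : (a * h) ^ 2 = ⁅h, a⁆ := by
      rw [mul_sq hsq, ha2, hh, one_mul, one_mul, commutatorElement_comm hsq]
    have := mem_centralizer_iff_commutatorElement_eq_one.1 ha (a * h) (by
      simp only [Set.mem_ofPred_eq]; rwa [hah])
    rw [commutatorElement_mul_right hsq, commutatorElement_self, one_mul,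
      commutatorElement_comm hsq] at this
    exact hc this
  · exact hT a ha2

theorem mem_centralizer_or_mul_mem (g : G) :
    g ∈ centralizer {x : G | x ^ 2 ≠ 1} ∨ g * h ∈ centralizer {x : G | x ^ 2 ≠ 1} := by
  have hsq := hG.sq_mem_center
  simp only [mem_centralizer_iff_commutatorElement_eq_one, Set.mem_ofPred_eq]
  by_cases hg2 : g ^ 2 = 1
  swap
  · exact Or.inl fun t ht => hG.commutatorElement_eq_one_of_sq_ne_one hh hT hg2 ht
  by_cases hex : ∃ t : G, t ^ 2 ≠ 1 ∧ ⁅g, t⁆ = 1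
  · obtain ⟨t₀, ht₀, hgt₀⟩ := hex
    refine Or.inl fun t ht => ?_
    have := hG.commutatorElement_eq_one_of_sq_ne_one hh hT (x := g * t₀)
      (by rwa [mul_sq hsq, hg2, one_mul, hgt₀, mul_one]) ht
    rwa [commutatorElement_mul_left hsq,
      hG.commutatorElement_eq_one_of_sq_ne_one hh hT ht₀ ht, mul_one] at this
  · push Not at hex
    refine Or.inr fun t ht => ?_
    rw [commutatorElement_mul_left hsq,
      (hG.commutatorElement_eq_one_or_sq g t hg2 ht).resolve_left (hex t ht), hT t ht,
      hG.sq_mul_sq]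

theorem index_centralizer_eq_two (hnc : h ∉ center G) :
    (centralizer {x : G | x ^ 2 ≠ 1}).index = 2 := by
  obtain ⟨s, hs, hs2⟩ := hG.exists_inverted_sq_ne_one hh hnc
  have hhC : h ∉ centralizer {x : G | x ^ 2 ≠ 1} := fun hC =>
    hs2 (hs ▸ mem_centralizer_iff_commutatorElement_eq_one.1 hC s hs2)
  refine index_eq_two_iff.2 ⟨h, fun g => ?_⟩
  rcases hG.mem_centralizer_or_mul_mem hh hT g with hg | hg
  · exact Or.inr ⟨hg, fun hgh => hhC (by simpa using mul_mem (inv_mem hg) hgh)⟩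
  · exact Or.inl ⟨hg, fun hg' => hhC (by simpa using mul_mem (inv_mem hg') hg)⟩

end IsGoodExpFour

/-- **Lemma 4.13**: if `h` is a noncentral involution in a good group `H` of exponent 4
with `|Φ(H)| > 2`, then `H` has an abelian subgroup `A` of index 2 every element of which
is inverted by `h`. -/
theorem good_noncentral_involution (H : Type*) [Group H] (hgood : IsGood H)
    (hexp : Monoid.exponent H = 4)
    (hfr : Nat.card (frattini H) = 0 ∨ 2 < Nat.card (frattini H))
    (h : H) (hh : orderOf h = 2) (hnc : h ∉ Subgroup.center H) :
    ∃ A : Subgroup H, (∀ a ∈ A, ∀ b ∈ A, a * b = b * a) ∧ A.index = 2 ∧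
      ∀ a ∈ A, h⁻¹ * a * h = a⁻¹ := by
  have hG := hgood.isGoodExpFour fun x => hexp ▸ Monoid.pow_exponent_eq_one x
  have hh2 : h ^ 2 = 1 := hh ▸ pow_orderOf_eq_one h
  have hT := fun x => hG.inverted_of_sq_ne_one hh2 hfr hnc (x := x)
  have hA : ∀ a ∈ centralizer {x : H | x ^ 2 ≠ 1}, h⁻¹ * a * h = a⁻¹ := fun a ha =>
    hG.inv_mul_mul_eq_inv hh2 (hG.inverted_of_mem_centralizer hh2 hT ha)
  exact ⟨_, fun a ha b hb => mul_comm_of_forall_inv_mul_mul_eq_inv hA ha hb,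
    hG.index_centralizer_eq_two hh2 hT hnc, hA⟩
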